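/- arXiv:1807.02695 — 7 statements merged into one kernel-verified Lean document; each statement's English description precedes it below -/
import Mathlib

section
/- Continuation Principle for the Z-domination game: Let G be a finite simple graph without isolated vertices and let B ⊆ A ⊆ V(G). Then γ_Zg(G|A) ≤ γ_Zg(G|B) and γ'_Zg(G|A) ≤ γ'_Zg(G|B). -/
/- Formalization of the domination games from "The variety of domination games".

A game is specified by a legality predicate `legal : List V → V → Prop`, where the list
records the previously played vertices (most recent first).  Players alternate moves;
each move must be legal; the game ends when no legal move exists.  Dominator wants to
minimize, Staller to maximize, the total number of moves.

`canEnd legal k turn h` states that, with history `h` and the player to move given by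
`turn` (`true` = Dominator), Dominator can guarantee that at most `k` further moves are
played (against any play of Staller).  The value of the game under optimal play by both
players is then the least such `k` from the empty history. -/

/-- The closed neighborhood `N[v]` of a vertex. -/
def closedNbhd {V : Type*} (G : SimpleGraph V) (v : V) : Set V :=
  insert v (G.neighborSet v)

/-- `⋃_{u ∈ h} N[u]` : the set of vertices dominated by the moves in `h`. -/
def dominatedBy {V : Type*} (G : SimpleGraph V) (h : List V) : Set V :=
  ⋃ u ∈ h, closedNbhd G u

/-- `⋃_{u ∈ h} N(u)` : the set of vertices totally dominated by the moves in `h`. -/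
def totDominatedBy {V : Type*} (G : SimpleGraph V) (h : List V) : Set V :=
  ⋃ u ∈ h, G.neighborSet u

/-- Legality in the domination game: `N[v] \ ⋃_{j<i} N[v_j] ≠ ∅`. -/
def dgLegal {V : Type*} (G : SimpleGraph V) (h : List V) (v : V) : Prop :=
  (closedNbhd G v \ dominatedBy G h).Nonempty

/-- Legality in the total domination game: `N(v) \ ⋃_{j<i} N(v_j) ≠ ∅`. -/
def tgLegal {V : Type*} (G : SimpleGraph V) (h : List V) (v : V) : Prop :=
  (G.neighborSet v \ totDominatedBy G h).Nonempty

/-- Legality in the Z-domination game on `G|A`: `N(v) \ (A ∪ ⋃_{j<i} N[v_j]) ≠ ∅`. -/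
def zLegal {V : Type*} (G : SimpleGraph V) (A : Set V) (h : List V) (v : V) : Prop :=
  (G.neighborSet v \ (A ∪ dominatedBy G h)).Nonempty

/-- Legality in the LL-domination game on `G|A`: `N[v] \ (A ∪ ⋃_{j<i} N(v_j)) ≠ ∅`. -/
def llLegal {V : Type*} (G : SimpleGraph V) (A : Set V) (h : List V) (v : V) : Prop :=
  (closedNbhd G v \ (A ∪ totDominatedBy G h)).Nonempty

/-- Legality in the L-domination game on `G|A`: as in the LL-game, and moreover no vertex
may be played twice. -/
def lLegal {V : Type*} (G : SimpleGraph V) (A : Set V) (h : List V) (v : V) : Prop :=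
  llLegal G A h v ∧ v ∉ h

/-- `canEnd legal k turn h` : with previously played vertices `h` and the player to move
given by `turn` (`true` = Dominator, `false` = Staller), Dominator has a strategy
guaranteeing that at most `k` further moves are made. -/
def canEnd {V : Type*} (legal : List V → V → Prop) : ℕ → Bool → List V → Prop
  | 0, _, h => ∀ v, ¬ legal h v
  | k+1, true, h => (∀ v, ¬ legal h v) ∨ ∃ v, legal h v ∧ canEnd legal k false (v :: h)
  | k+1, false, h => ∀ v, legal h v → canEnd legal k true (v :: h)

/-- The number of moves in the game with legality predicate `legal` when both players play
optimally (Dominator minimizing, Staller maximizing the number of moves); `dFirst = true`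
means Dominator makes the first move. -/
noncomputable def gameVal {V : Type*} (legal : List V → V → Prop) (dFirst : Bool) : ℕ :=
  sInf {k | canEnd legal k dFirst []}

/-- The game Z-domination number `γ_Zg(G|A)` (Dominator starts). -/
noncomputable def gammaZgA {V : Type*} (G : SimpleGraph V) (A : Set V) : ℕ :=
  gameVal (zLegal G A) true

/-- The Staller-start game Z-domination number `γ'_Zg(G|A)`. -/
noncomputable def gammaZgA' {V : Type*} (G : SimpleGraph V) (A : Set V) : ℕ :=
  gameVal (zLegal G A) false

/-- The game L-domination number `γ_Lg(G|A)` (Dominator starts). -/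
noncomputable def gammaLgA {V : Type*} (G : SimpleGraph V) (A : Set V) : ℕ :=
  gameVal (lLegal G A) true

/-- The Staller-start game L-domination number `γ'_Lg(G|A)`. -/
noncomputable def gammaLgA' {V : Type*} (G : SimpleGraph V) (A : Set V) : ℕ :=
  gameVal (lLegal G A) false

/-- The game LL-domination number `γ_LLg(G|A)` (Dominator starts). -/
noncomputable def gammaLLgA {V : Type*} (G : SimpleGraph V) (A : Set V) : ℕ :=
  gameVal (llLegal G A) true

/-- The Staller-start game LL-domination number `γ'_LLg(G|A)`. -/
noncomputable def gammaLLgA' {V : Type*} (G : SimpleGraph V) (A : Set V) : ℕ :=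
  gameVal (llLegal G A) false

/-- The game domination number `γ_g(G)` (Dominator starts). -/
noncomputable def gammaG {V : Type*} (G : SimpleGraph V) : ℕ :=
  gameVal (dgLegal G) true

/-- The game total domination number `γ_tg(G)` (Dominator starts). -/
noncomputable def gammaTg {V : Type*} (G : SimpleGraph V) : ℕ :=
  gameVal (tgLegal G) true

/-- The game Z-domination number `γ_Zg(G)` (Dominator starts). -/
noncomputable def gammaZg {V : Type*} (G : SimpleGraph V) : ℕ := gammaZgA G ∅

/-- The Staller-start game Z-domination number `γ'_Zg(G)`. -/
noncomputable def gammaZg' {V : Type*} (G : SimpleGraph V) : ℕ := gammaZgA' G ∅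

/-- The game L-domination number `γ_Lg(G)` (Dominator starts). -/
noncomputable def gammaLg {V : Type*} (G : SimpleGraph V) : ℕ := gammaLgA G ∅

/-- The Staller-start game L-domination number `γ'_Lg(G)`. -/
noncomputable def gammaLg' {V : Type*} (G : SimpleGraph V) : ℕ := gammaLgA' G ∅

/-- The game LL-domination number `γ_LLg(G)` (Dominator starts). -/
noncomputable def gammaLLg {V : Type*} (G : SimpleGraph V) : ℕ := gammaLLgA G ∅

/-- The Staller-start game LL-domination number `γ'_LLg(G)`. -/
noncomputable def gammaLLg' {V : Type*} (G : SimpleGraph V) : ℕ := gammaLLgA' G ∅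

/-- `G` has no isolated vertices. -/
def isolateFree {V : Type*} (G : SimpleGraph V) : Prop := ∀ v : V, ∃ u, G.Adj v u

/-- The domination number `γ(G)`. -/
noncomputable def domNum {V : Type*} (G : SimpleGraph V) : ℕ :=
  sInf {k | ∃ S : Finset V, S.card = k ∧ ∀ v : V, ∃ u ∈ S, v ∈ closedNbhd G u}

/-- The total domination number `γ_t(G)`. -/
noncomputable def totDomNum {V : Type*} (G : SimpleGraph V) : ℕ :=
  sInf {k | ∃ S : Finset V, S.card = k ∧ ∀ v : V, ∃ u ∈ S, G.Adj u v}

/- Dominator plays the game on `G|A` while imagining a game on `G|B` in which he follows an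
optimal strategy, and copies each real move of Staller into the imagined game.  The invariant
is that every vertex predominated or dominated in the imagined game is so in the real one; in
particular every real move is also legal in the imagined game.  When the imagined strategy
plays `v`, Dominator makes a real move after which `N[v]` is dominated: `v` itself if that is
legal; otherwise `N(v)` is already dominated, and if `v` is not, a neighbour of `v` (which
exists since `G` has no isolated vertices) does it.  So the real game ends no later than the
imagined one. -/

section Game

variable {V : Type*}

theorem canEnd_of_le_of_lt {legal : List V → V → Prop} (μ : List V → ℕ)
    (hμ : ∀ h v, legal h v → μ (v :: h) < μ h) :
    ∀ (k : ℕ) (turn : Bool) (h : List V), μ h ≤ k → canEnd legal k turn h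
  | 0, _, h, hk => fun v hv => by have := hμ h v hv; omega
  | k + 1, true, h, hk => by
    by_cases hmove : ∃ v, legal h v
    · obtain ⟨v, hv⟩ := hmove
      exact Or.inr ⟨v, hv, canEnd_of_le_of_lt μ hμ k false _ (by have := hμ h v hv; omega)⟩
    · exact Or.inl fun v hv => hmove ⟨v, hv⟩
  | k + 1, false, h, hk => fun v hv =>
    canEnd_of_le_of_lt μ hμ k true _ (by have := hμ h v hv; omega)

theorem gameVal_le_gameVal {legal legal' : List V → V → Prop} {turn : Bool}
    (hfin : ∃ k, canEnd legal' k turn [])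
    (hcan : ∀ k, canEnd legal' k turn [] → canEnd legal k turn []) :
    gameVal legal turn ≤ gameVal legal' turn :=
  Nat.sInf_le (hcan _ (Nat.sInf_mem hfin))

end Game

section ZGame

variable {V : Type*} (G : SimpleGraph V)

def zDominated (A : Set V) (h : List V) : Set V :=
  A ∪ dominatedBy G h

variable {G}

lemma neighborSet_subset_closedNbhd (v : V) : G.neighborSet v ⊆ closedNbhd G v :=
  Set.subset_insert v _

lemma zDominated_cons (A : Set V) (v : V) (h : List V) :
    zDominated G A (v :: h) = closedNbhd G v ∪ zDominated G A h := by
  ext x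
  simp only [zDominated, dominatedBy, List.mem_cons, Set.mem_union, Set.mem_iUnion]
  aesop

lemma subset_zDominated_cons (A : Set V) (v : V) (h : List V) :
    zDominated G A h ⊆ zDominated G A (v :: h) := by
  rw [zDominated_cons]
  exact Set.subset_union_right

lemma zLegal_of_zDominated_subset {A B : Set V} {h h' : List V}
    (hdom : zDominated G B h ⊆ zDominated G A h') {w : V} (hw : zLegal G A h' w) :
    zLegal G B h w :=
  hw.mono (Set.sdiff_subset_sdiff_right hdom)

lemma zDominated_compl_ssubset_of_zLegal {A : Set V} {h : List V} {v : V}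
    (hv : zLegal G A h v) : (zDominated G A (v :: h))ᶜ ⊂ (zDominated G A h)ᶜ := by
  obtain ⟨u, hu, hu'⟩ := hv
  refine Set.ssubset_iff_subset_ne.mpr
    ⟨Set.compl_subset_compl.mpr (subset_zDominated_cons A v h), fun heq => ?_⟩
  have : u ∈ (zDominated G A (v :: h))ᶜ := heq ▸ hu'
  exact this (by rw [zDominated_cons]; exact Or.inl (neighborSet_subset_closedNbhd v hu))

theorem exists_zLegal_closedNbhd_subset (hG : isolateFree G) {A : Set V} {h : List V}
    (hmove : ∃ w, zLegal G A h w) (v : V) :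
    ∃ w, zLegal G A h w ∧ closedNbhd G v ⊆ zDominated G A (w :: h) := by
  by_cases hv : zLegal G A h v
  · exact ⟨v, hv, by rw [zDominated_cons]; exact Set.subset_union_left⟩
  have hN : G.neighborSet v ⊆ zDominated G A h := fun x hx => by
    by_contra hx'
    exact hv ⟨x, hx, hx'⟩
  by_cases hvdom : v ∈ zDominated G A h
  · obtain ⟨w, hw⟩ := hmove
    exact ⟨w, hw, (Set.insert_subset hvdom hN).trans (subset_zDominated_cons A w h)⟩
  · obtain ⟨u, hvu⟩ := hG v
    refine ⟨u, ⟨v, hvu.symm, hvdom⟩, ?_⟩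
    rw [zDominated_cons]
    exact Set.insert_subset (Or.inl (neighborSet_subset_closedNbhd u hvu.symm))
      (hN.trans Set.subset_union_right)

theorem canEnd_zLegal_of_zDominated_subset (hG : isolateFree G) {A B : Set V} :
    ∀ (k : ℕ) (turn : Bool) {h h' : List V}, zDominated G B h ⊆ zDominated G A h' →
      canEnd (zLegal G B) k turn h → canEnd (zLegal G A) k turn h'
  | 0, _, _, _, hdom, hc => fun w hw => hc w (zLegal_of_zDominated_subset hdom hw)
  | k + 1, true, h, h', hdom, hc => by
    rcases hc with hend | ⟨v, -, hc⟩
    · exact Or.inl fun w hw => hend w (zLegal_of_zDominated_subset hdom hw)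
    by_cases hmove : ∃ w, zLegal G A h' w
    · obtain ⟨w, hw, hvw⟩ := exists_zLegal_closedNbhd_subset hG hmove v
      refine Or.inr ⟨w, hw, canEnd_zLegal_of_zDominated_subset hG k false ?_ hc⟩
      rw [zDominated_cons]
      exact Set.union_subset hvw (hdom.trans (subset_zDominated_cons A w h'))
    · exact Or.inl fun w hw => hmove ⟨w, hw⟩
  | k + 1, false, _, _, hdom, hc => fun w hw =>
    canEnd_zLegal_of_zDominated_subset hG k true
      (by rw [zDominated_cons, zDominated_cons]; exact Set.union_subset_union_right _ hdom)
      (hc w (zLegal_of_zDominated_subset hdom hw))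

theorem exists_canEnd_zLegal [Finite V] (A : Set V) (turn : Bool) :
    ∃ k, canEnd (zLegal G A) k turn [] :=
  ⟨_, canEnd_of_le_of_lt (fun h => (zDominated G A h)ᶜ.ncard)
    (fun _ _ hv => Set.ncard_lt_ncard (zDominated_compl_ssubset_of_zLegal hv)) _ turn [] le_rfl⟩

end ZGame

/-- Continuation Principle for the Z-domination game on predominated graphs. -/
theorem continuation_principle_Z {V : Type*} [Fintype V] (G : SimpleGraph V)
    (hG : isolateFree G) (A B : Set V) (hBA : B ⊆ A) :
    gammaZgA G A ≤ gammaZgA G B ∧ gammaZgA' G A ≤ gammaZgA' G B := by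
  have hstart : zDominated G B [] ⊆ zDominated G A [] := Set.union_subset_union_left _ hBA
  have hle : ∀ turn, gameVal (zLegal G A) turn ≤ gameVal (zLegal G B) turn := fun turn =>
    gameVal_le_gameVal (exists_canEnd_zLegal B turn)
      (fun k => canEnd_zLegal_of_zDominated_subset hG k turn hstart)
  exact ⟨hle true, hle false⟩
end

section
/- Continuation Principle for the LL-domination game: Let G be a finite simple graph without isolated vertices and let B ⊆ A ⊆ V(G). Then γ_LLg(G|A) ≤ γ_LLg(G|B) and γ'_LLg(G|A) ≤ γ'_LLg(G|B). -/
/- Dominator plays the game on `G|A` while imagining the game on `G|B`, in which he follows an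
optimal strategy, keeping every vertex that is predominated or totally dominated in the imagined
game so in the real game. Then every move legal in the real game is legal in the imagined one,
so Staller's real moves are copied there. When an imagined Dominator move `v` is illegal in the
real game, `N[v]` is already covered in the real game, so `v` is played in the imagined game
only; the imagined game then has Staller to move, and Dominator's next real move is copied into
it as Staller's reply. Thus every real move is matched by at least one imagined move.

An unending game has value `sInf ∅ = 0`, so the imagined game must be shown to end: in a finite
isolate-free graph Dominator can always play a vertex with a neighbour not yet dominated. -/

section Game

variable {V : Type*} {legal legal' : List V → V → Prop} {t : Bool}

theorem gameVal_le_gameVal_s1 (hend : ∃ k, canEnd legal' k t [])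
    (htransfer : ∀ k, canEnd legal' k t [] → canEnd legal k t []) :
    gameVal legal t ≤ gameVal legal' t :=
  Nat.sInf_le (htransfer _ (Nat.sInf_mem hend))

end Game

section LLGame

variable {V : Type*} {G : SimpleGraph V} {A B : Set V} {h h₁ h₂ : List V} {u v w : V}
  {t : Bool}

def llDominated (G : SimpleGraph V) (A : Set V) (h : List V) : Set V :=
  A ∪ totDominatedBy G h

@[simp]
theorem totDominatedBy_cons :
    totDominatedBy G (v :: h) = G.neighborSet v ∪ totDominatedBy G h := by
  ext x
  simp [totDominatedBy]

theorem llDominated_cons :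
    llDominated G A (v :: h) = llDominated G A h ∪ G.neighborSet v := by
  ext x
  simp only [llDominated, totDominatedBy_cons, Set.mem_union]
  tauto

theorem llDominated_subset_cons : llDominated G A h ⊆ llDominated G A (v :: h) := by
  rw [llDominated_cons]
  exact Set.subset_union_left

theorem llDominated_cons_subset_cons (hD : llDominated G B h₂ ⊆ llDominated G A h₁) :
    llDominated G B (v :: h₂) ⊆ llDominated G A (v :: h₁) := by
  rw [llDominated_cons, llDominated_cons]
  exact Set.union_subset_union_left _ hD

theorem llDominated_cons_subset_of_not_llLegal
    (hD : llDominated G B h₂ ⊆ llDominated G A h₁) (hv : ¬ llLegal G A h₁ v) :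
    llDominated G B (v :: h₂) ⊆ llDominated G A h₁ := by
  have hN : closedNbhd G v ⊆ llDominated G A h₁ :=
    Set.sdiff_eq_empty.mp (Set.not_nonempty_iff_eq_empty.mp hv)
  rw [llDominated_cons]
  exact Set.union_subset hD ((Set.subset_insert _ _).trans hN)

theorem llLegal.anti (hD : llDominated G B h₂ ⊆ llDominated G A h₁)
    (hv : llLegal G A h₁ v) : llLegal G B h₂ v := by
  obtain ⟨w, hwN, hwD⟩ := hv
  exact ⟨w, hwN, fun hw => hwD (hD hw)⟩

theorem llLegal_of_adj (huw : G.Adj u w) (hw : w ∉ llDominated G A h) : llLegal G A h u :=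
  ⟨w, Set.mem_insert_of_mem _ huw, hw⟩

theorem canEnd_llLegal_succ_false {k : ℕ}
    (hI : ∀ h₁ h₂, llDominated G B h₂ ⊆ llDominated G A h₁ →
      canEnd (llLegal G B) k true h₂ → canEnd (llLegal G A) k true h₁)
    (hD : llDominated G B h₂ ⊆ llDominated G A h₁) (hc : canEnd (llLegal G B) k true h₂) :
    canEnd (llLegal G A) (k + 1) false h₁ :=
  fun _ _ => hI _ _ (hD.trans llDominated_subset_cons) hc

theorem canEnd_llLegal_transfer (k : ℕ) :
    (∀ t h₁ h₂, llDominated G B h₂ ⊆ llDominated G A h₁ →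
      canEnd (llLegal G B) k t h₂ → canEnd (llLegal G A) k t h₁) ∧
    (∀ h₁ h₂, llDominated G B h₂ ⊆ llDominated G A h₁ →
      canEnd (llLegal G B) k false h₂ → canEnd (llLegal G A) (k + 1) true h₁) := by
  induction k with
  | zero =>
    refine ⟨fun t h₁ h₂ hD hc => ?_,
      fun h₁ h₂ hD hc => Or.inl fun v hv => hc v (hv.anti hD)⟩
    cases t <;> exact fun v hv => hc v (hv.anti hD)
  | succ k ih =>
    obtain ⟨ihSame, ihShift⟩ := ih
    have hSame : ∀ t h₁ h₂, llDominated G B h₂ ⊆ llDominated G A h₁ →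
        canEnd (llLegal G B) (k + 1) t h₂ → canEnd (llLegal G A) (k + 1) t h₁ := by
      rintro (_ | _) h₁ h₂ hD hc
      · exact fun v hv => ihSame true _ _ (llDominated_cons_subset_cons hD) (hc v (hv.anti hD))
      · rcases hc with hdead | ⟨v, -, hc⟩
        · exact Or.inl fun v hv => hdead v (hv.anti hD)
        by_cases hv : llLegal G A h₁ v
        · exact Or.inr ⟨v, hv, ihSame false _ _ (llDominated_cons_subset_cons hD) hc⟩
        · exact ihShift h₁ (v :: h₂) (llDominated_cons_subset_of_not_llLegal hD hv) hc
    refine ⟨hSame, fun h₁ h₂ hD hc => ?_⟩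
    by_cases hmove : ∃ u, llLegal G A h₁ u
    · obtain ⟨u, hu⟩ := hmove
      exact Or.inr ⟨u, hu, canEnd_llLegal_succ_false (ihSame true)
        (llDominated_cons_subset_cons hD) (hc u (hu.anti hD))⟩
    · exact Or.inl (not_exists.mp hmove)

theorem canEnd_llLegal_of_llDominated_subset {k : ℕ}
    (hD : llDominated G B h₂ ⊆ llDominated G A h₁) (hc : canEnd (llLegal G B) k t h₂) :
    canEnd (llLegal G A) k t h₁ :=
  (canEnd_llLegal_transfer k).1 t h₁ h₂ hD hc

theorem exists_adj_not_mem_llDominated (hG : isolateFree G) (hv : llLegal G A h v) :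
    ∃ u w, G.Adj u w ∧ w ∉ llDominated G A h := by
  obtain ⟨w, hwN, hwD⟩ := hv
  rcases hwN with rfl | hvw
  · obtain ⟨u, hwu⟩ := hG w
    exact ⟨u, w, hwu.symm, hwD⟩
  · exact ⟨v, w, hvw, hwD⟩

variable [Finite V]

theorem ncard_compl_llDominated_cons_le :
    (llDominated G A (v :: h))ᶜ.ncard ≤ (llDominated G A h)ᶜ.ncard :=
  Set.ncard_le_ncard (Set.compl_subset_compl.mpr llDominated_subset_cons) (Set.toFinite _)

theorem ncard_compl_llDominated_cons_lt (huw : G.Adj u w) (hw : w ∉ llDominated G A h) :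
    (llDominated G A (u :: h))ᶜ.ncard < (llDominated G A h)ᶜ.ncard := by
  refine Set.ncard_lt_ncard ⟨Set.compl_subset_compl.mpr llDominated_subset_cons, ?_⟩
    (Set.toFinite _)
  intro hsub
  refine hsub hw ?_
  rw [llDominated_cons]
  exact Or.inr huw

theorem canEnd_llLegal_of_ncard_le (hG : isolateFree G) (m : ℕ) :
    ∀ h, (llDominated G A h)ᶜ.ncard ≤ m → canEnd (llLegal G A) (2 * m + 1) true h := by
  induction m with
  | zero =>
    refine fun h hm => Or.inl fun v hv => ?_
    obtain ⟨u, w, huw, hw⟩ := exists_adj_not_mem_llDominated hG hv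
    have := ncard_compl_llDominated_cons_lt huw hw
    omega
  | succ m ih =>
    intro h hm
    by_cases hmove : ∃ v, llLegal G A h v
    · obtain ⟨v, hv⟩ := hmove
      obtain ⟨u, w, huw, hw⟩ := exists_adj_not_mem_llDominated hG hv
      refine Or.inr ⟨u, llLegal_of_adj huw hw, fun v _ => ih _ ?_⟩
      exact Nat.lt_succ_iff.mp <| ncard_compl_llDominated_cons_le.trans_lt
        (ncard_compl_llDominated_cons_lt huw hw) |>.trans_le hm
    · exact Or.inl (not_exists.mp hmove)

theorem exists_canEnd_llLegal (hG : isolateFree G) (A : Set V) (t : Bool) :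
    ∃ k, canEnd (llLegal G A) k t [] := by
  set m := (llDominated G A [])ᶜ.ncard
  cases t
  · exact ⟨2 * m + 2, fun v _ =>
      canEnd_llLegal_of_ncard_le hG m _ ncard_compl_llDominated_cons_le⟩
  · exact ⟨2 * m + 1, canEnd_llLegal_of_ncard_le hG m _ le_rfl⟩

end LLGame

/-- Continuation Principle for the LL-domination game on predominated graphs. -/
theorem continuation_principle_LL {V : Type*} [Fintype V] (G : SimpleGraph V)
    (hG : isolateFree G) (A B : Set V) (hBA : B ⊆ A) :
    gammaLLgA G A ≤ gammaLLgA G B ∧ gammaLLgA' G A ≤ gammaLLgA' G B := by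
  have hD : llDominated G B [] ⊆ llDominated G A [] := Set.union_subset_union_left _ hBA
  exact ⟨gameVal_le_gameVal_s1 (exists_canEnd_llLegal hG B true)
      fun _ => canEnd_llLegal_of_llDominated_subset hD,
    gameVal_le_gameVal_s1 (exists_canEnd_llLegal hG B false)
      fun _ => canEnd_llLegal_of_llDominated_subset hD⟩
end

section
/- If G is a finite simple graph without isolated vertices, then |γ_Zg(G) − γ'_Zg(G)| ≤ 1. -/
section ZGameAux

variable {V : Type*} (G : SimpleGraph V)

private lemma dominatedBy_cons (v : V) (h : List V) :
    dominatedBy G (v :: h) = closedNbhd G v ∪ dominatedBy G h := by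
  ext x
  simp only [dominatedBy, List.mem_cons, Set.mem_iUnion, Set.mem_union, exists_prop]
  constructor
  · rintro ⟨u, (rfl | hu), hx⟩
    · exact Or.inl hx
    · exact Or.inr ⟨u, hu, hx⟩
  · rintro (hx | ⟨u, hu, hx⟩)
    · exact ⟨v, Or.inl rfl, hx⟩
    · exact ⟨u, Or.inr hu, hx⟩

private lemma zLegal_mono {h₁ h₂ : List V}
    (hs : dominatedBy G h₁ ⊆ dominatedBy G h₂) {v : V} :
    zLegal G ∅ h₂ v → zLegal G ∅ h₁ v := by
  rintro ⟨x, hx1, hx2⟩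
  refine ⟨x, hx1, fun hc => hx2 ?_⟩
  rcases hc with hc | hc
  · exact absurd hc (Set.notMem_empty x)
  · exact Or.inr (hs hc)

private lemma not_zLegal_iff (h : List V) (v : V) :
    ¬ zLegal G ∅ h v ↔ G.neighborSet v ⊆ dominatedBy G h := by
  rw [zLegal, Set.not_nonempty_iff_eq_empty, Set.diff_eq_empty, Set.empty_union]

private lemma dom_cons_subset {h : List V} {T : Set V} (v : V)
    (h1 : closedNbhd G v ⊆ T) (h2 : dominatedBy G h ⊆ T) :
    dominatedBy G (v :: h) ⊆ T := by
  rw [dominatedBy_cons]; exact Set.union_subset h1 h2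

private lemma subset_dom_cons (v : V) (h : List V) :
    dominatedBy G h ⊆ dominatedBy G (v :: h) := by
  rw [dominatedBy_cons]; exact Set.subset_union_right

private lemma closed_subset_dom_cons (v : V) (h : List V) :
    closedNbhd G v ⊆ dominatedBy G (v :: h) := by
  rw [dominatedBy_cons]; exact Set.subset_union_left

/-- The four transfer statements (continuation principle and pass lemmas) for the
Z-domination game, proved by a simultaneous induction on the move budget. -/
private lemma z_quad (hG : isolateFree G) : ∀ k : ℕ, ∀ h₁ h₂ : List V,
    dominatedBy G h₁ ⊆ dominatedBy G h₂ →
    (canEnd (zLegal G ∅) k true h₁ → canEnd (zLegal G ∅) k true h₂) ∧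
    (canEnd (zLegal G ∅) k false h₁ → canEnd (zLegal G ∅) k false h₂) ∧
    (canEnd (zLegal G ∅) k false h₁ → canEnd (zLegal G ∅) (k + 1) true h₂) ∧
    (canEnd (zLegal G ∅) k true h₁ → canEnd (zLegal G ∅) (k + 1) false h₂) := by
  intro k
  induction k with
  | zero =>
    intro h₁ h₂ hs
    refine ⟨?_, ?_, ?_, ?_⟩
    · intro H
      exact fun v hv => H v (zLegal_mono G hs hv)
    · intro H
      exact fun v hv => H v (zLegal_mono G hs hv)
    · intro H
      exact Or.inl (fun v hv => H v (zLegal_mono G hs hv))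
    · intro H
      intro v hv
      exact absurd (zLegal_mono G hs hv) (H v)
  | succ k ih =>
    intro h₁ h₂ hs
    have subA : ∀ m : V, dominatedBy G (m :: h₁) ⊆ dominatedBy G (m :: h₂) := by
      intro m
      exact dom_cons_subset G m (closed_subset_dom_cons G m h₂)
        (hs.trans (subset_dom_cons G m h₂))
    refine ⟨?_, ?_, ?_, ?_⟩
    · -- (1) Dominator-turn continuation
      intro H
      have H' : (∀ v, ¬ zLegal G ∅ h₁ v) ∨
          (∃ v, zLegal G ∅ h₁ v ∧ canEnd (zLegal G ∅) k false (v :: h₁)) := H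
      rcases H' with H0 | ⟨v, hv, hc⟩
      · exact Or.inl (fun v hv => H0 v (zLegal_mono G hs hv))
      · by_cases hvl : zLegal G ∅ h₂ v
        · exact Or.inr ⟨v, hvl, (ih (v :: h₁) (v :: h₂) (subA v)).2.1 hc⟩
        · have hNv : G.neighborSet v ⊆ dominatedBy G h₂ := (not_zLegal_iff G h₂ v).mp hvl
          by_cases hvm : v ∈ dominatedBy G h₂
          · have subB : dominatedBy G (v :: h₁) ⊆ dominatedBy G h₂ :=
              dom_cons_subset G v (Set.insert_subset hvm hNv) hs
            exact (ih (v :: h₁) h₂ subB).2.2.1 hc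
          · obtain ⟨u, hu⟩ := hG v
            have hul : zLegal G ∅ h₂ u := by
              refine ⟨v, hu.symm, fun hc' => ?_⟩
              rcases hc' with hc' | hc'
              · exact absurd hc' (Set.notMem_empty v)
              · exact hvm hc'
            have subC : dominatedBy G (v :: h₁) ⊆ dominatedBy G (u :: h₂) := by
              refine dom_cons_subset G v ?_ (hs.trans (subset_dom_cons G u h₂))
              refine Set.insert_subset ?_ (hNv.trans (subset_dom_cons G u h₂))
              exact closed_subset_dom_cons G u h₂ (Set.mem_insert_of_mem u hu.symm)
            exact Or.inr ⟨u, hul, (ih (v :: h₁) (u :: h₂) subC).2.1 hc⟩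
    · -- (2) Staller-turn continuation
      intro H
      intro v hv
      exact (ih (v :: h₁) (v :: h₂) (subA v)).1 (H v (zLegal_mono G hs hv))
    · -- (3) pass lemma: Staller-turn to Dominator-turn
      intro H
      by_cases hleg : ∃ u, zLegal G ∅ h₂ u
      · obtain ⟨u, hu⟩ := hleg
        exact Or.inr ⟨u, hu,
          (ih (u :: h₁) (u :: h₂) (subA u)).2.2.2 (H u (zLegal_mono G hs hu))⟩
      · exact Or.inl (fun u hu => hleg ⟨u, hu⟩)
    · -- (4) pass lemma: Dominator-turn to Staller-turn
      intro H
      intro u hu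
      have H' : (∀ v, ¬ zLegal G ∅ h₁ v) ∨
          (∃ v, zLegal G ∅ h₁ v ∧ canEnd (zLegal G ∅) k false (v :: h₁)) := H
      rcases H' with H0 | ⟨v, hv, hc⟩
      · exact absurd (zLegal_mono G hs hu) (H0 u)
      · have hs' : dominatedBy G h₁ ⊆ dominatedBy G (u :: h₂) :=
          hs.trans (subset_dom_cons G u h₂)
        by_cases hvl : zLegal G ∅ (u :: h₂) v
        · have sub : dominatedBy G (v :: h₁) ⊆ dominatedBy G (v :: u :: h₂) :=
            dom_cons_subset G v (closed_subset_dom_cons G v (u :: h₂))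
              (hs'.trans (subset_dom_cons G v (u :: h₂)))
          exact Or.inr ⟨v, hvl, (ih (v :: h₁) (v :: u :: h₂) sub).2.1 hc⟩
        · have hNv : G.neighborSet v ⊆ dominatedBy G (u :: h₂) :=
            (not_zLegal_iff G (u :: h₂) v).mp hvl
          by_cases hvm : v ∈ dominatedBy G (u :: h₂)
          · have subB : dominatedBy G (v :: h₁) ⊆ dominatedBy G (u :: h₂) :=
              dom_cons_subset G v (Set.insert_subset hvm hNv) hs'
            exact (ih (v :: h₁) (u :: h₂) subB).2.2.1 hc
          · obtain ⟨w, hw⟩ := hG v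
            have hwl : zLegal G ∅ (u :: h₂) w := by
              refine ⟨v, hw.symm, fun hc' => ?_⟩
              rcases hc' with hc' | hc'
              · exact absurd hc' (Set.notMem_empty v)
              · exact hvm hc'
            have subC : dominatedBy G (v :: h₁) ⊆ dominatedBy G (w :: u :: h₂) := by
              refine dom_cons_subset G v ?_
                (hs'.trans (subset_dom_cons G w (u :: h₂)))
              refine Set.insert_subset ?_ (hNv.trans (subset_dom_cons G w (u :: h₂)))
              exact closed_subset_dom_cons G w (u :: h₂) (Set.mem_insert_of_mem w hw.symm)
            exact Or.inr ⟨w, hwl, (ih (v :: h₁) (w :: u :: h₂) subC).2.1 hc⟩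

/-- The Z-domination game always terminates within `|V \ dominated|` further moves. -/
private lemma z_canEnd_of_ncard [Fintype V] : ∀ n : ℕ, ∀ (t : Bool) (h : List V),
    ((dominatedBy G h)ᶜ).ncard ≤ n → canEnd (zLegal G ∅) n t h := by
  intro n
  induction n with
  | zero =>
    intro t h hn
    have h0 : ((dominatedBy G h)ᶜ).ncard = 0 := Nat.le_zero.mp hn
    have hcompl : (dominatedBy G h)ᶜ = (∅ : Set V) :=
      (Set.ncard_eq_zero (Set.toFinite _)).mp h0
    have huniv : dominatedBy G h = Set.univ := by
      rw [← Set.compl_empty, ← hcompl, compl_compl]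
    have hnol : ∀ v, ¬ zLegal G ∅ h v := by
      rintro v ⟨x, _, hx2⟩
      exact hx2 (Or.inr (huniv ▸ Set.mem_univ x))
    cases t
    · exact hnol
    · exact hnol
  | succ n ihn =>
    intro t h hn
    have key : ∀ v, zLegal G ∅ h v → ((dominatedBy G (v :: h))ᶜ).ncard ≤ n := by
      rintro v ⟨x, hx1, hx2⟩
      have hxnot : x ∉ dominatedBy G h := fun hc => hx2 (Or.inr hc)
      have hxin : x ∈ dominatedBy G (v :: h) :=
        closed_subset_dom_cons G v h (Set.mem_insert_of_mem v hx1)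
      have hss : (dominatedBy G (v :: h))ᶜ ⊂ (dominatedBy G h)ᶜ := by
        refine ⟨Set.compl_subset_compl.mpr (subset_dom_cons G v h), fun hc => ?_⟩
        exact (hc hxnot) hxin
      have := Set.ncard_lt_ncard hss (Set.toFinite _)
      omega
    cases t
    · exact fun v hv => ihn true (v :: h) (key v hv)
    · by_cases hleg : ∃ v, zLegal G ∅ h v
      · obtain ⟨v, hv⟩ := hleg
        exact Or.inr ⟨v, hv, ihn false (v :: h) (key v hv)⟩
      · exact Or.inl (fun v hv => hleg ⟨v, hv⟩)

end ZGameAux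

/-- The Dominator-start and Staller-start game Z-domination numbers differ by at most one. -/
theorem z_game_D_S_diff_le_one {V : Type*} [Fintype V] (G : SimpleGraph V)
    (hG : isolateFree G) :
    |(gammaZg G : ℤ) - (gammaZg' G : ℤ)| ≤ 1 := by
  have hT : ∃ k, canEnd (zLegal G ∅) k true ([] : List V) :=
    ⟨_, z_canEnd_of_ncard G _ true [] le_rfl⟩
  have hF : ∃ k, canEnd (zLegal G ∅) k false ([] : List V) :=
    ⟨_, z_canEnd_of_ncard G _ false [] le_rfl⟩
  have ha : canEnd (zLegal G ∅) (gammaZg G) true [] :=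
    Nat.sInf_mem (s := {k | canEnd (zLegal G ∅) k true []}) hT
  have hb : canEnd (zLegal G ∅) (gammaZg' G) false [] :=
    Nat.sInf_mem (s := {k | canEnd (zLegal G ∅) k false []}) hF
  have h1 : gammaZg' G ≤ gammaZg G + 1 :=
    Nat.sInf_le ((z_quad G hG (gammaZg G) [] [] subset_rfl).2.2.2 ha)
  have h2 : gammaZg G ≤ gammaZg' G + 1 :=
    Nat.sInf_le ((z_quad G hG (gammaZg' G) [] [] subset_rfl).2.2.1 hb)
  rw [abs_le]
  constructor <;> [skip; skip] <;> omega
end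

section
/- If G is a finite simple graph without isolated vertices, then |γ_Lg(G) − γ'_Lg(G)| ≤ 1. -/
/-!
Dominator uses an imagination strategy: he plays optimally in an imagined game that is behind the
real one, meaning that every vertex played in the imagined game is played or dead in the real one
(a dead vertex has its closed neighbourhood inside `A ∪ ⋃ N(v_j)`), and whatever is covered in the
imagined game is covered in the real one. Every real legal move is then legal in the imagined game,
and being behind survives when both games receive the same move: this is the continuation principle.

For `γ_Lg ≤ γ'_Lg + 1`, Dominator opens with any legal move and then follows the Staller-start game
in imagination. For `γ'_Lg ≤ γ_Lg + 1`, Staller's real move `u` is answered in the imagined game by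
Dominator's optimal reply `v`, and `u` is copied into the imagined game if it is still legal there.
The imagined game is then ahead only by `v`; Dominator catches up by playing `v` in reality, or any
legal move if `v` is already dead.
-/

namespace LDominationGame

variable {V : Type*} {G : SimpleGraph V} {A : Set V} {g r h : List V} {v : V}

variable (G A) in
def lCovered (h : List V) : Set V := A ∪ totDominatedBy G h

lemma lCovered_cons : lCovered G A (v :: h) = lCovered G A h ∪ G.neighborSet v := by
  ext x
  simp only [lCovered, totDominatedBy, List.mem_cons, Set.iUnion_iUnion_eq_or_left,
    Set.mem_union]
  tauto

lemma lCovered_mono (hgr : g ⊆ r) : lCovered G A g ⊆ lCovered G A r := by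
  refine Set.union_subset_union_right A fun x hx => ?_
  simp only [totDominatedBy, Set.mem_iUnion] at hx ⊢
  obtain ⟨u, hu, hxu⟩ := hx
  exact ⟨u, hgr hu, hxu⟩

lemma neighborSet_subset_lCovered (hv : v ∈ h) : G.neighborSet v ⊆ lCovered G A h :=
  (Set.subset_biUnion_of_mem (u := fun u => G.neighborSet u) hv).trans Set.subset_union_right

lemma lLegal_iff : lLegal G A h v ↔ v ∉ h ∧ ¬ closedNbhd G v ⊆ lCovered G A h := by
  rw [lLegal, llLegal, Set.sdiff_nonempty, and_comm, lCovered]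

lemma not_lLegal_iff : ¬ lLegal G A h v ↔ v ∈ h ∨ closedNbhd G v ⊆ lCovered G A h := by
  rw [lLegal_iff, not_and_or, not_not, not_not]

variable (G A) in
def Behind (g r : List V) : Prop :=
  (∀ x ∈ g, x ∈ r ∨ closedNbhd G x ⊆ lCovered G A r) ∧ lCovered G A g ⊆ lCovered G A r

namespace Behind

lemma of_subset (hgr : g ⊆ r) : Behind G A g r :=
  ⟨fun _ hx => Or.inl (hgr hx), lCovered_mono hgr⟩

lemma refl (g : List V) : Behind G A g g :=
  of_subset (List.Subset.refl g)

lemma trans {m : List V} (hgm : Behind G A g m) (hmr : Behind G A m r) : Behind G A g r :=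
  ⟨fun x hx => (hgm.1 x hx).elim (hmr.1 x) fun hd => Or.inr (hd.trans hmr.2),
    hgm.2.trans hmr.2⟩

lemma lLegal_of_lLegal (hgr : Behind G A g r) (hv : lLegal G A r v) : lLegal G A g v := by
  rw [lLegal_iff] at hv ⊢
  exact ⟨fun hvg => (hgr.1 v hvg).elim hv.1 hv.2, fun hd => hv.2 (hd.trans hgr.2)⟩

lemma cons (hgr : Behind G A g r) (v : V) : Behind G A (v :: g) (v :: r) := by
  refine ⟨fun x hx => ?_, ?_⟩
  · rcases List.mem_cons.1 hx with rfl | hx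
    · exact Or.inl List.mem_cons_self
    · exact (hgr.1 x hx).imp (List.mem_cons_of_mem v)
        fun hd => hd.trans (lCovered_mono (List.subset_cons_self v r))
  · rw [lCovered_cons, lCovered_cons]
    exact Set.union_subset_union_left _ hgr.2

lemma cons_of_mem (hgr : Behind G A g r) (hv : v ∈ r) : Behind G A (v :: g) r :=
  (hgr.cons v).trans (of_subset (List.cons_subset.2 ⟨hv, List.Subset.refl r⟩))

lemma cons_self_of_not_lLegal (hv : ¬ lLegal G A r v) : Behind G A (v :: r) r := by
  have hv := not_lLegal_iff.1 hv
  refine ⟨fun x hx => ?_, ?_⟩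
  · rcases List.mem_cons.1 hx with rfl | hx
    · exact hv
    · exact Or.inl hx
  · rw [lCovered_cons]
    exact Set.union_subset subset_rfl <|
      hv.elim neighborSet_subset_lCovered fun hd => (Set.subset_insert v _).trans hd

lemma stuck_or_exists_lLegal (hgr : Behind G A g r) :
    (∀ x, ¬ lLegal G A r x) ∨ ∃ x, lLegal G A r x ∧ Behind G A g (x :: r) := by
  by_cases hx : ∃ x, lLegal G A r x
  · obtain ⟨x, hx⟩ := hx
    exact Or.inr ⟨x, hx, hgr.trans (of_subset (List.subset_cons_self x r))⟩
  · exact Or.inl (not_exists.1 hx)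

lemma stuck_or_exists_lLegal_of_cons (hgr : Behind G A g (v :: r)) :
    (∀ x, ¬ lLegal G A r x) ∨ ∃ x, lLegal G A r x ∧ Behind G A g (x :: r) := by
  by_cases hv : lLegal G A r v
  · exact Or.inr ⟨v, hv, hgr⟩
  · exact (hgr.trans (cons_self_of_not_lLegal hv)).stuck_or_exists_lLegal

end Behind

theorem canEnd_of_behind {k : ℕ} {t : Bool} (hgr : Behind G A g r)
    (hc : canEnd (lLegal G A) k t g) : canEnd (lLegal G A) k t r := by
  induction k generalizing t g r with
  | zero => exact fun v hv => hc v (hgr.lLegal_of_lLegal hv)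
  | succ k ih =>
    cases t with
    | false => exact fun u hu => ih (hgr.cons u) (hc u (hgr.lLegal_of_lLegal hu))
    | true =>
      rcases hc with hstuck | ⟨v, -, hcv⟩
      · exact Or.inl fun u hu => hstuck u (hgr.lLegal_of_lLegal hu)
      rcases (hgr.cons v).stuck_or_exists_lLegal_of_cons with hstuck | ⟨x, hx, hgx⟩
      · exact Or.inl hstuck
      · exact Or.inr ⟨x, hx, ih hgx hcv⟩

theorem canEnd_true_succ_of_behind {k : ℕ} (hgr : Behind G A g r)
    (hc : canEnd (lLegal G A) k false g) : canEnd (lLegal G A) (k + 1) true r := by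
  rcases hgr.stuck_or_exists_lLegal with hstuck | ⟨x, hx, hgx⟩
  · exact Or.inl hstuck
  · exact Or.inr ⟨x, hx, canEnd_of_behind hgx hc⟩

theorem canEnd_false_succ_of_behind {k : ℕ} (hgr : Behind G A g r)
    (hc : canEnd (lLegal G A) k true g) : canEnd (lLegal G A) (k + 1) false r := by
  induction k using Nat.strong_induction_on generalizing g r with
  | _ k ih =>
  intro u hu
  obtain ⟨j, rfl⟩ : ∃ j, k = j + 1 := Nat.exists_eq_succ_of_ne_zero fun hk => by
    subst hk; exact hc u (hgr.lLegal_of_lLegal hu)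
  obtain ⟨v, -, hcv⟩ : ∃ v, lLegal G A g v ∧ canEnd (lLegal G A) j false (v :: g) :=
    hc.resolve_left fun hstuck => hstuck u (hgr.lLegal_of_lLegal hu)
  have hvg : Behind G A (v :: g) (v :: u :: r) :=
    (hgr.trans (Behind.of_subset (List.subset_cons_self u r))).cons v
  by_cases huv : lLegal G A (v :: g) u
  · obtain ⟨i, rfl⟩ : ∃ i, j = i + 1 := Nat.exists_eq_succ_of_ne_zero fun hj => by
      subst hj; exact hcv u huv
    have huvg : Behind G A (u :: v :: g) (v :: u :: r) :=
      hvg.cons_of_mem (List.mem_cons_of_mem v List.mem_cons_self)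
    rcases huvg.stuck_or_exists_lLegal_of_cons with hstuck | ⟨x, hx, hgx⟩
    · exact Or.inl hstuck
    · exact Or.inr ⟨x, hx, ih i (by omega) hgx (hcv u huv)⟩
  · rcases hvg.stuck_or_exists_lLegal_of_cons with hstuck | ⟨x, hx, hgx⟩
    · exact Or.inl hstuck
    · exact Or.inr ⟨x, hx, canEnd_of_behind hgx hcv⟩

end LDominationGame

theorem canEnd_of_natCard_le {V : Type*} [Finite V] {legal : List V → V → Prop}
    (hlegal : ∀ h v, legal h v → v ∉ h) {k : ℕ} {t : Bool} {h : List V} (hh : h.Nodup)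
    (hk : Nat.card V ≤ k + h.length) : canEnd legal k t h := by
  induction k generalizing t h with
  | zero =>
    intro v hv
    have := (List.nodup_cons.2 ⟨hlegal h v hv, hh⟩).length_le_natCard
    simp only [List.length_cons] at this
    omega
  | succ k ih =>
    have hmove : ∀ v, legal h v → ∀ t, canEnd legal k t (v :: h) := fun v hv t =>
      ih (List.nodup_cons.2 ⟨hlegal h v hv, hh⟩) (by simp only [List.length_cons]; omega)
    cases t with
    | false => exact fun v hv => hmove v hv true
    | true =>
      by_cases hex : ∃ v, legal h v
      · obtain ⟨v, hv⟩ := hex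
        exact Or.inr ⟨v, hv, hmove v hv false⟩
      · exact Or.inl (not_exists.1 hex)

open LDominationGame in
theorem abs_gammaLgA_sub_gammaLgA'_le_one {V : Type*} [Finite V] (G : SimpleGraph V)
    (A : Set V) : |(gammaLgA G A : ℤ) - (gammaLgA' G A : ℤ)| ≤ 1 := by
  have hfin (t : Bool) : canEnd (lLegal G A) (Nat.card V) t [] :=
    canEnd_of_natCard_le (fun _ _ hv => hv.2) List.nodup_nil (by simp)
  have hD : canEnd (lLegal G A) (gammaLgA G A) true [] :=
    Nat.sInf_mem (s := {k | canEnd (lLegal G A) k true []}) ⟨_, hfin true⟩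
  have hS : canEnd (lLegal G A) (gammaLgA' G A) false [] :=
    Nat.sInf_mem (s := {k | canEnd (lLegal G A) k false []}) ⟨_, hfin false⟩
  have hDS : gammaLgA G A ≤ gammaLgA' G A + 1 :=
    Nat.sInf_le (canEnd_true_succ_of_behind (Behind.refl []) hS)
  have hSD : gammaLgA' G A ≤ gammaLgA G A + 1 :=
    Nat.sInf_le (canEnd_false_succ_of_behind (Behind.refl []) hD)
  rw [abs_le]
  omega

theorem l_game_D_S_diff_le_one_general {V : Type*} [Fintype V] (G : SimpleGraph V) :
    |(gammaLg G : ℤ) - (gammaLg' G : ℤ)| ≤ 1 :=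
  abs_gammaLgA_sub_gammaLgA'_le_one G ∅

/-- The Dominator-start and Staller-start game L-domination numbers differ by at most one. -/
theorem l_game_D_S_diff_le_one {V : Type*} [Fintype V] (G : SimpleGraph V)
    (hG : isolateFree G) :
    |(gammaLg G : ℤ) - (gammaLg' G : ℤ)| ≤ 1 :=
  l_game_D_S_diff_le_one_general G
end

section
/- If G is a finite simple graph without isolated vertices, then γ_g(G) ≤ γ_Lg(G). -/
section Aux
variable {V : Type*} {G : SimpleGraph V}

lemma mem_dominatedBy {h : List V} {x : V} :
    x ∈ dominatedBy G h ↔ ∃ u ∈ h, x ∈ closedNbhd G u := by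
  simp [dominatedBy]

lemma closed_sub {u : V} {h : List V} (hu : u ∈ h) : closedNbhd G u ⊆ dominatedBy G h :=
  fun _ hx => mem_dominatedBy.2 ⟨u, hu, hx⟩

lemma dom_cons {v : V} {h : List V} :
    dominatedBy G (v :: h) = closedNbhd G v ∪ dominatedBy G h := by
  ext x; simp [dominatedBy]

lemma totDom_sub {h : List V} : totDominatedBy G h ⊆ dominatedBy G h := by
  intro x hx
  simp only [totDominatedBy, Set.mem_iUnion, exists_prop] at hx
  obtain ⟨u, hu, hxu⟩ := hx
  exact mem_dominatedBy.2 ⟨u, hu, Set.mem_insert_of_mem _ hxu⟩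

lemma transfer {h h' : List V} (hsub : dominatedBy G h' ⊆ dominatedBy G h)
    {v : V} (hv : dgLegal G h v) : lLegal G ∅ h' v := by
  obtain ⟨x, hx1, hx2⟩ := hv
  constructor
  · refine ⟨x, hx1, fun hmem => ?_⟩
    rcases hmem with h0 | h0
    · exact h0
    · exact hx2 (hsub (totDom_sub h0))
  · intro hvh'
    exact hx2 (hsub (closed_sub hvh' hx1))

lemma absorb {h' : List V} {u : V} (hu : ¬ lLegal G ∅ h' u) :
    closedNbhd G u ⊆ dominatedBy G h' := by
  by_cases hmem : u ∈ h'
  · exact closed_sub hmem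
  · intro x hx
    have hll : ¬ llLegal G ∅ h' u := fun h => hu ⟨h, hmem⟩
    have hx' : x ∈ (∅ : Set V) ∪ totDominatedBy G h' := by
      by_contra hc; exact hll ⟨x, hx, hc⟩
    rcases hx' with h0 | h0
    · exact h0.elim
    · exact totDom_sub h0

lemma not_dg {h : List V} {v : V} (h1 : ¬ dgLegal G h v) :
    closedNbhd G v ⊆ dominatedBy G h := by
  intro x hx; by_contra hc; exact h1 ⟨x, hx, hc⟩

lemma canEnd_mono {legal : List V → V → Prop} :
    ∀ {k : ℕ} {t : Bool} {h : List V}, canEnd legal k t h → canEnd legal (k+1) t h := by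
  intro k
  induction k with
  | zero =>
    intro t h hc
    cases t with
    | false => intro v hv; exact (hc v hv).elim
    | true => exact Or.inl hc
  | succ j IHj =>
    intro t h hc
    cases t with
    | false => intro v hv; exact IHj (hc v hv)
    | true =>
      rcases hc with h0 | ⟨v, hv, hc⟩
      · exact Or.inl h0
      · exact Or.inr ⟨v, hv, IHj hc⟩

lemma canEnd_of_le {legal : List V → V → Prop} {k k' : ℕ} {t : Bool} {h : List V}
    (hk : k ≤ k') (hc : canEnd legal k t h) : canEnd legal k' t h := by
  induction hk with
  | refl => exact hc
  | step _ ih => exact canEnd_mono (by exact ih)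

lemma canEnd_L_card [Fintype V] [DecidableEq V] {A : Set V} :
    ∀ (k : ℕ) (t : Bool) (h : List V), Fintype.card V ≤ h.toFinset.card + k →
      canEnd (lLegal G A) k t h := by
  intro k
  induction k with
  | zero =>
    intro t h hcard v hv
    have huniv : h.toFinset = Finset.univ :=
      Finset.eq_univ_of_card _ (le_antisymm (Finset.card_le_univ _) (by simpa using hcard))
    exact hv.2 (by rw [← List.mem_toFinset, huniv]; exact Finset.mem_univ v)
  | succ j IH =>
    intro t h hcard
    have step : ∀ v, lLegal G A h v → ∀ t', canEnd (lLegal G A) j t' (v :: h) := by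
      intro v hv t'
      apply IH t'
      rw [List.toFinset_cons, Finset.card_insert_of_notMem (by simpa using hv.2)]
      omega
    cases t with
    | false => intro v hv; exact step v hv true
    | true =>
      by_cases hex : ∃ v, lLegal G A h v
      · obtain ⟨v, hv⟩ := hex
        exact Or.inr ⟨v, hv, step v hv false⟩
      · exact Or.inl (by push_neg at hex; exact hex)

end Aux

section Key
variable {V : Type*}

/-- The six-state imagination-strategy lemma. -/
lemma key (G : SimpleGraph V) : ∀ k : ℕ,
    (∀ h h' : List V, dominatedBy G h' ⊆ dominatedBy G h →
        canEnd (lLegal G ∅) k true h' → canEnd (dgLegal G) k true h) ∧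
    (∀ h h' : List V, dominatedBy G h' ⊆ dominatedBy G h →
        canEnd (lLegal G ∅) k false h' → canEnd (dgLegal G) k false h) ∧
    (∀ h h' : List V, dominatedBy G h' ⊆ dominatedBy G h →
        canEnd (lLegal G ∅) k false h' → canEnd (dgLegal G) (k+1) true h) ∧
    (∀ h h' : List V, dominatedBy G h' ⊆ dominatedBy G h →
        canEnd (lLegal G ∅) k true h' → canEnd (dgLegal G) (k+1) false h) ∧
    (∀ (v : V) (h h' : List V),
        dominatedBy G h' ⊆ dominatedBy G h ∪ closedNbhd G v →
        canEnd (lLegal G ∅) k true h' → canEnd (dgLegal G) (k+2) true h) ∧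
    (∀ (v : V) (h h' : List V),
        dominatedBy G h' ⊆ dominatedBy G h ∪ closedNbhd G v →
        canEnd (lLegal G ∅) k false h' → canEnd (dgLegal G) (k+1) true h) := by
  intro k
  induction k using Nat.strong_induction_on with
  | _ k IH =>
  -- A : sync, Dominator to move in both
  have hA : ∀ h h' : List V, dominatedBy G h' ⊆ dominatedBy G h →
      canEnd (lLegal G ∅) k true h' → canEnd (dgLegal G) k true h := by
    intro h h' hsub hL
    match k, hL with
    | 0, hL => exact fun v hv => hL v (transfer hsub hv)
    | j+1, Or.inl hno => exact Or.inl (fun v hv => hno v (transfer hsub hv))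
    | j+1, Or.inr ⟨v, hv, hLv⟩ =>
      by_cases hvd : dgLegal G h v
      · refine Or.inr ⟨v, hvd, (IH j (by omega)).2.1 (v :: h) (v :: h') ?_ hLv⟩
        rw [dom_cons, dom_cons]
        exact Set.union_subset_union_right _ hsub
      · refine (IH j (by omega)).2.2.1 h (v :: h') ?_ hLv
        rw [dom_cons]
        exact Set.union_subset (not_dg hvd) hsub
  -- B : sync, Staller to move in both
  have hB : ∀ h h' : List V, dominatedBy G h' ⊆ dominatedBy G h →
      canEnd (lLegal G ∅) k false h' → canEnd (dgLegal G) k false h := by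
    intro h h' hsub hL
    match k, hL with
    | 0, hL => exact fun v hv => hL v (transfer hsub hv)
    | j+1, hL =>
      intro u hu
      refine (IH j (by omega)).1 (u :: h) (u :: h') ?_ (hL u (transfer hsub hu))
      rw [dom_cons, dom_cons]
      exact Set.union_subset_union_right _ hsub
  -- D : imagined Dominator to move, real Staller to move, one imagined move ahead
  have hD : ∀ h h' : List V, dominatedBy G h' ⊆ dominatedBy G h →
      canEnd (lLegal G ∅) k true h' → canEnd (dgLegal G) (k+1) false h := by
    intro h h' hsub hL
    intro u hu
    have hLu : lLegal G ∅ h' u := transfer hsub hu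
    match k, hL with
    | 0, hL => exact (hL u hLu).elim
    | j+1, Or.inl hno => exact (hno u hLu).elim
    | j+1, Or.inr ⟨v, hv, hLv⟩ =>
      by_cases hu' : lLegal G ∅ (v :: h') u
      · match j, hLv with
        | 0, hLv => exact (hLv u hu').elim
        | i+1, hLv =>
          refine (IH i (by omega)).2.2.2.2.1 v (u :: h) (u :: v :: h') ?_ (hLv u hu')
          rw [dom_cons, dom_cons, dom_cons]
          intro x hx
          rcases hx with hx | hx | hx
          · exact Or.inl (Or.inl hx)
          · exact Or.inr hx
          · exact Or.inl (Or.inr (hsub hx))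
      · refine (IH j (by omega)).2.2.2.2.2 v (u :: h) (v :: h') ?_ hLv
        have habs : closedNbhd G u ⊆ dominatedBy G (v :: h') := absorb hu'
        rw [dom_cons, dom_cons]
        intro x hx
        rcases hx with hx | hx
        · exact Or.inr hx
        · exact Or.inl (Or.inr (hsub hx))
  -- C : imagined Staller to move, real Dominator to move, one imagined move ahead
  have hC : ∀ h h' : List V, dominatedBy G h' ⊆ dominatedBy G h →
      canEnd (lLegal G ∅) k false h' → canEnd (dgLegal G) (k+1) true h := by
    intro h h' hsub hL
    by_cases hex : ∃ w, dgLegal G h w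
    · obtain ⟨w, hw⟩ := hex
      have hLw : lLegal G ∅ h' w := transfer hsub hw
      match k, hL with
      | 0, hL => exact (hL w hLw).elim
      | j+1, hL =>
        refine Or.inr ⟨w, hw, (IH j (by omega)).2.2.2.1 (w :: h) (w :: h') ?_ (hL w hLw)⟩
        rw [dom_cons, dom_cons]
        exact Set.union_subset_union_right _ hsub
    · push_neg at hex
      match k with
      | 0 => exact Or.inl hex
      | j+1 => exact Or.inl hex
  -- E : both Dominator to move, debt v, two imagined moves ahead
  have hE : ∀ (v : V) (h h' : List V),
      dominatedBy G h' ⊆ dominatedBy G h ∪ closedNbhd G v →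
      canEnd (lLegal G ∅) k true h' → canEnd (dgLegal G) (k+2) true h := by
    intro v h h' hsub hL
    by_cases hvd : dgLegal G h v
    · refine Or.inr ⟨v, hvd, hD (v :: h) h' ?_ hL⟩
      rw [dom_cons]
      intro x hx
      rcases hsub hx with h0 | h0
      · exact Or.inr h0
      · exact Or.inl h0
    · have hsub' : dominatedBy G h' ⊆ dominatedBy G h := by
        intro x hx
        rcases hsub hx with h0 | h0
        · exact h0
        · exact not_dg hvd h0
      exact canEnd_mono (canEnd_mono (hA h h' hsub' hL))
  -- F : imagined Staller / real Dominator to move, debt v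
  have hF : ∀ (v : V) (h h' : List V),
      dominatedBy G h' ⊆ dominatedBy G h ∪ closedNbhd G v →
      canEnd (lLegal G ∅) k false h' → canEnd (dgLegal G) (k+1) true h := by
    intro v h h' hsub hL
    by_cases hvd : dgLegal G h v
    · refine Or.inr ⟨v, hvd, hB (v :: h) h' ?_ hL⟩
      rw [dom_cons]
      intro x hx
      rcases hsub hx with h0 | h0
      · exact Or.inr h0
      · exact Or.inl h0
    · have hsub' : dominatedBy G h' ⊆ dominatedBy G h := by
        intro x hx
        rcases hsub hx with h0 | h0
        · exact h0
        · exact not_dg hvd h0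
      exact hC h h' hsub' hL
  exact ⟨hA, hB, hC, hD, hE, hF⟩

end Key

/-- The game domination number is at most the game L-domination number. -/
theorem gammaG_le_gammaLg {V : Type*} [Fintype V] (G : SimpleGraph V)
    (hG : isolateFree G) :
    gammaG G ≤ gammaLg G := by
  classical
  have hne : canEnd (lLegal G ∅) (Fintype.card V) true [] :=
    canEnd_L_card _ _ _ (by simp)
  have hmem : canEnd (lLegal G ∅) (gammaLg G) true [] := by
    have := Nat.sInf_mem (⟨_, hne⟩ : Set.Nonempty {k | canEnd (lLegal G ∅) k true []})
    exact this
  exact Nat.sInf_le ((key G (gammaLg G)).1 [] [] subset_rfl hmem)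
end

section
/- If G is a finite simple graph without isolated vertices, then γ_tg(G) ≤ γ_Lg(G). -/
lemma nbhd_subset_tot {V : Type*} (G : SimpleGraph V) {h : List V} {u : V}
    (hu : u ∈ h) : G.neighborSet u ⊆ totDominatedBy G h :=
  Set.subset_biUnion_of_mem hu

lemma tot_cons {V : Type*} (G : SimpleGraph V) (v : V) (h : List V) :
    totDominatedBy G (v :: h) = G.neighborSet v ∪ totDominatedBy G h := by
  ext x
  simp only [totDominatedBy, Set.mem_iUnion, List.mem_cons, Set.mem_union]
  constructor
  · rintro ⟨u, (rfl | hu), hx⟩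
    · exact Or.inl hx
    · exact Or.inr ⟨u, hu, hx⟩
  · rintro (hx | ⟨u, hu, hx⟩)
    · exact ⟨v, Or.inl rfl, hx⟩
    · exact ⟨u, Or.inr hu, hx⟩

/-- Under the invariant `tot(m) ⊆ tot(r)`, every tg-legal move in the real game is
L-legal in the imagined game. -/
lemma tg_to_l {V : Type*} (G : SimpleGraph V) {r m : List V}
    (hsub : totDominatedBy G m ⊆ totDominatedBy G r) {v : V}
    (hv : tgLegal G r v) : lLegal G ∅ m v := by
  obtain ⟨x, hx1, hx2⟩ := hv
  refine ⟨⟨x, Set.mem_insert_iff.mpr (Or.inr hx1), ?_⟩, ?_⟩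
  · rintro (h | h)
    · exact h
    · exact hx2 (hsub h)
  · intro hvm
    exact hx2 (hsub (nbhd_subset_tot G hvm hx1))

/-- Simulation: if Dominator can finish the L-game in `k` moves from imagined history `m`,
he can finish the total domination game in `k` moves from real history `r`, provided the
imagined covered set is contained in the real covered set. -/
lemma canEnd_tg_of_canEnd_l {V : Type*} (G : SimpleGraph V) :
    ∀ (k : ℕ) (turn : Bool) (r m : List V),
      totDominatedBy G m ⊆ totDominatedBy G r →
      canEnd (lLegal G ∅) k turn m → canEnd (tgLegal G) k turn r := by
  intro k
  induction k with
  | zero =>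
    intro turn r m hsub hL v hv
    exact hL v (tg_to_l G hsub hv)
  | succ k ih =>
    intro turn r m hsub hL
    cases turn with
    | false =>
      intro v hv
      refine ih true (v :: r) (v :: m) ?_ (hL v (tg_to_l G hsub hv))
      rw [tot_cons, tot_cons]
      exact Set.union_subset_union_right _ hsub
    | true =>
      rcases hL with hL | ⟨v, _, hcan⟩
      · exact Or.inl (fun v hv => hL v (tg_to_l G hsub hv))
      · by_cases hex : ∃ w, tgLegal G r w
        · obtain ⟨w, hw⟩ := hex
          by_cases hvtg : tgLegal G r v
          · refine Or.inr ⟨v, hvtg, ih false (v :: r) (v :: m) ?_ hcan⟩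
            rw [tot_cons, tot_cons]
            exact Set.union_subset_union_right _ hsub
          · -- v is not tg-legal, hence N(v) ⊆ tot(r); play w instead
            refine Or.inr ⟨w, hw, ih false (w :: r) (v :: m) ?_ hcan⟩
            rw [tot_cons, tot_cons]
            intro x hx
            rcases hx with hx | hx
            · by_contra hxr
              exact hvtg ⟨x, hx, fun hc => hxr (Or.inr hc)⟩
            · exact Or.inr (hsub hx)
        · exact Or.inl (fun w hw => hex ⟨w, hw⟩)

/-- The L-game terminates: since no vertex may be played twice, Dominator can always
guarantee at most `|V|` further moves. -/
lemma lGame_bounded {V : Type*} [Fintype V] [DecidableEq V] (G : SimpleGraph V) :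
    ∀ (k : ℕ) (turn : Bool) (h : List V),
      Fintype.card V ≤ k + h.toFinset.card → canEnd (lLegal G ∅) k turn h := by
  classical
  intro k
  induction k with
  | zero =>
    intro turn h hcard v hv
    have hvh : v ∈ h := by
      have huniv : h.toFinset = Finset.univ :=
        Finset.eq_univ_of_card _ (le_antisymm (Finset.card_le_univ _) (by simpa using hcard))
      have : v ∈ h.toFinset := huniv ▸ Finset.mem_univ v
      simpa using this
    exact hv.2 hvh
  | succ k ih =>
    intro turn h hcard
    have key : ∀ v, lLegal G ∅ h v → canEnd (lLegal G ∅) k true (v :: h) ∧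
        canEnd (lLegal G ∅) k false (v :: h) := by
      intro v hv
      have hc : Fintype.card V ≤ k + (v :: h).toFinset.card := by
        have hvh : v ∉ h := hv.2
        have : (v :: h).toFinset.card = h.toFinset.card + 1 := by
          rw [List.toFinset_cons, Finset.card_insert_of_notMem (by simpa using hvh)]
        omega
      exact ⟨ih true (v :: h) hc, ih false (v :: h) hc⟩
    cases turn with
    | false => exact fun v hv => (key v hv).1
    | true =>
      by_cases hex : ∃ v, lLegal G ∅ h v
      · obtain ⟨v, hv⟩ := hex
        exact Or.inr ⟨v, hv, (key v hv).2⟩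
      · exact Or.inl (fun v hv => hex ⟨v, hv⟩)

/-- The game total domination number is at most the game L-domination number. -/
theorem gammaTg_le_gammaLg {V : Type*} [Fintype V] (G : SimpleGraph V)
    (hG : isolateFree G) :
    gammaTg G ≤ gammaLg G := by
  classical
  have hne : {k | canEnd (lLegal G ∅) k true ([] : List V)}.Nonempty :=
    ⟨Fintype.card V, lGame_bounded G _ true [] (by simp)⟩
  have hmem : canEnd (lLegal G ∅) (gammaLg G) true ([] : List V) := Nat.sInf_mem hne
  have htg : canEnd (tgLegal G) (gammaLg G) true ([] : List V) :=
    canEnd_tg_of_canEnd_l G _ true [] [] subset_rfl hmem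
  exact Nat.sInf_le htg
end

section
/- If G is a finite simple graph without isolated vertices, then γ_t(G) ≤ γ_Lg(G) ≤ 2γ_t(G) − 1. -/
/-!
Lower bound: when the game ends, the played vertices totally dominate `G`, since otherwise any
neighbour of a vertex they miss (one exists, `G` having no isolated vertex) would be unplayed and
legal. So the game lasts at least `γ_t(G)` moves.

Upper bound: Dominator fixes a minimum total dominating set `S` and always plays an unplayed
vertex of `S`. This is possible while the game goes on, because a vertex that is still
undominated has a neighbour in `S`, necessarily unplayed, and that neighbour is legal. Each of
Dominator's moves uses up a vertex of `S`, so after at most `γ_t(G)` of them, interleaved with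
at most `γ_t(G) - 1` moves of Staller, no legal move is left.
-/

section Game

variable {V : Type*} {legal : List V → V → Prop}

theorem canEnd.exists_terminal :
    ∀ {k : ℕ} {turn : Bool} {h : List V}, canEnd legal k turn h →
      ∃ l : List V, l.length ≤ k ∧ ∀ v, ¬ legal (l ++ h) v
  | 0, _, _, hc => ⟨[], le_rfl, hc⟩
  | _ + 1, true, _, Or.inl hterm => ⟨[], Nat.zero_le _, hterm⟩
  | _ + 1, true, _, Or.inr ⟨v, _, hc⟩ => by
      obtain ⟨l, hlen, hterm⟩ := hc.exists_terminal
      exact ⟨l ++ [v], by simpa using hlen, by simpa using hterm⟩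
  | _ + 1, false, h, hc => by
      by_cases hex : ∃ v, legal h v
      · obtain ⟨v, hv⟩ := hex
        obtain ⟨l, hlen, hterm⟩ := (hc v hv).exists_terminal
        exact ⟨l ++ [v], by simpa using hlen, by simpa using hterm⟩
      · exact ⟨[], Nat.zero_le _, fun v hv => hex ⟨v, hv⟩⟩

theorem canEnd_gameVal {k : ℕ} {dFirst : Bool} (hk : canEnd legal k dFirst []) :
    canEnd legal (gameVal legal dFirst) dFirst [] :=
  Nat.sInf_mem (s := {k | canEnd legal k dFirst []}) ⟨k, hk⟩

end Game

section TotalDomination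

variable {V : Type*}

def IsTotDominating (G : SimpleGraph V) (S : Finset V) : Prop := ∀ v, ∃ u ∈ S, G.Adj u v

variable {G : SimpleGraph V}

theorem mem_totDominatedBy {h : List V} {w : V} :
    w ∈ totDominatedBy G h ↔ ∃ u ∈ h, G.Adj u w := by
  simp [totDominatedBy, SimpleGraph.mem_neighborSet]

theorem totDomNum_le_card {S : Finset V} (hS : IsTotDominating G S) : totDomNum G ≤ S.card :=
  Nat.sInf_le ⟨S, rfl, hS⟩

theorem exists_isTotDominating_card_eq_totDomNum [Fintype V] (hG : isolateFree G) :
    ∃ S : Finset V, S.card = totDomNum G ∧ IsTotDominating G S :=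
  Nat.sInf_mem (s := {k | ∃ S : Finset V, S.card = k ∧ IsTotDominating G S})
    ⟨_, Finset.univ, rfl, fun v => let ⟨u, hu⟩ := hG v; ⟨u, Finset.mem_univ u, hu.symm⟩⟩

theorem lLegal.exists_mem_of_isTotDominating {A : Set V} {S : Finset V}
    (hS : IsTotDominating G S) {h : List V} {v : V} (hv : lLegal G A h v) :
    ∃ u ∈ S, lLegal G A h u := by
  obtain ⟨⟨w, -, hw⟩, -⟩ := hv
  obtain ⟨u, huS, huw⟩ := hS w
  have hu : u ∉ h := fun hu => hw (Or.inr (mem_totDominatedBy.mpr ⟨u, hu, huw⟩))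
  exact ⟨u, huS, ⟨w, Or.inr huw, hw⟩, hu⟩

theorem mem_totDominatedBy_of_forall_not_lLegal {A : Set V} (hG : isolateFree G) {l : List V}
    (hl : ∀ v, ¬ lLegal G A l v) {w : V} (hw : w ∉ A) : w ∈ totDominatedBy G l := by
  by_contra hwl
  obtain ⟨u, hwu⟩ := hG w
  have hu : u ∉ l := fun hu => hwl (mem_totDominatedBy.mpr ⟨u, hu, hwu.symm⟩)
  exact hl u ⟨⟨w, Or.inr hwu.symm, fun hw' => hw'.elim hw hwl⟩, hu⟩

theorem canEnd_lLegal_of_card_sdiff_le [DecidableEq V] {A : Set V} {S : Finset V}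
    (hS : IsTotDominating G S) :
    ∀ (m : ℕ) (h : List V), (S \ h.toFinset).card ≤ m →
      canEnd (lLegal G A) (2 * m - 1) true h ∧ canEnd (lLegal G A) (2 * m) false h
  | 0, h, hm => by
      have hterm : ∀ v, ¬ lLegal G A h v := fun v hv => by
        obtain ⟨u, huS, -, hu⟩ := hv.exists_mem_of_isTotDominating hS
        have : u ∈ S \ h.toFinset := by simpa [huS] using hu
        exact Finset.card_ne_zero_of_mem this (Nat.le_zero.mp hm)
      exact ⟨hterm, hterm⟩
  | m + 1, h, hm => by
      have dominator_move : ∀ h : List V, (S \ h.toFinset).card ≤ m + 1 →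
          canEnd (lLegal G A) (2 * m + 1) true h := by
        intro h hm
        by_cases hex : ∃ v, lLegal G A h v
        · obtain ⟨v, hv⟩ := hex
          obtain ⟨u, huS, hu⟩ := hv.exists_mem_of_isTotDominating hS
          have hu_new : u ∈ S \ h.toFinset := by simpa [huS] using hu.2
          have hm' : (S \ (u :: h).toFinset).card ≤ m := by
            rw [List.toFinset_cons, Finset.sdiff_insert, Finset.card_erase_of_mem hu_new]
            omega
          exact Or.inr ⟨u, hu, (canEnd_lLegal_of_card_sdiff_le hS m (u :: h) hm').2⟩
        · exact Or.inl fun v hv => hex ⟨v, hv⟩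
      refine ⟨dominator_move h hm, fun v _ => dominator_move (v :: h) (le_trans ?_ hm)⟩
      exact Finset.card_le_card (Finset.sdiff_subset_sdiff le_rfl (by simp))

end TotalDomination

/-- `γ_t(G) ≤ γ_Lg(G) ≤ 2γ_t(G) − 1`. -/
theorem gammaLg_bounds {V : Type*} [Fintype V] (G : SimpleGraph V)
    (hG : isolateFree G) :
    totDomNum G ≤ gammaLg G ∧ gammaLg G ≤ 2 * totDomNum G - 1 := by
  classical
  obtain ⟨S, hScard, hS⟩ := exists_isTotDominating_card_eq_totDomNum hG
  have hstrategy : canEnd (lLegal G ∅) (2 * totDomNum G - 1) true [] :=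
    (canEnd_lLegal_of_card_sdiff_le hS _ [] (by simp [hScard])).1
  refine ⟨?_, Nat.sInf_le hstrategy⟩
  obtain ⟨l, hlen, hterm⟩ := (canEnd_gameVal hstrategy).exists_terminal
  rw [List.append_nil] at hterm
  have hl : IsTotDominating G l.toFinset := fun w => by
    obtain ⟨u, hu, huw⟩ :=
      mem_totDominatedBy.mp (mem_totDominatedBy_of_forall_not_lLegal hG hterm (Set.notMem_empty w))
    exact ⟨u, List.mem_toFinset.mpr hu, huw⟩
  calc totDomNum G ≤ l.toFinset.card := totDomNum_le_card hl
    _ ≤ l.length := List.toFinset_card_le l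
    _ ≤ gammaLg G := hlen
end
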